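/- Let I ⊆ ℝ be an interval, C > 0, Δ > 0, and let ρ : I → (0,∞) be differentiable with |ρ'(x)| ≤ C/(ρ(x)(ρ(x) + Δ^{1/3})) for all x ∈ I. Then for all x, y ∈ I, |ρ(x) − ρ(y)| ≤ min{ (3C|x−y|)^{1/3}, (2C|x−y|)^{1/2} Δ^{−1/6} }. -/

import Mathlib

/-!
Writing `t = Δ^{1/3}`, the hypothesis says `ρ (ρ + t) |ρ'| ≤ C`. Since `ρ² ≤ ρ (ρ + t)` and
`t ρ ≤ ρ (ρ + t)`, the functions `ρ³` and `ρ²` are Lipschitz with constants `3C` and `2C / t`.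
For nonnegative `a, b` one has `|a - b|ⁿ ≤ |aⁿ - bⁿ|`, so each Lipschitz bound on `ρⁿ` becomes a
`1/n`-Hölder bound on `ρ`.
-/

theorem abs_sub_pow_le_abs_pow_sub {a b : ℝ} (ha : 0 ≤ a) (hb : 0 ≤ b) {n : ℕ} (hn : n ≠ 0) :
    |a - b| ^ n ≤ |a ^ n - b ^ n| := by
  wlog hab : b ≤ a generalizing a b
  · rw [abs_sub_comm, abs_sub_comm (a ^ n)]
    exact this hb ha (le_of_not_ge hab)
  have hsuper := pow_add_pow_le (sub_nonneg.2 hab) hb hn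
  rw [sub_add_cancel] at hsuper
  rw [abs_of_nonneg (sub_nonneg.2 hab), abs_of_nonneg (sub_nonneg.2 (pow_le_pow_left₀ hb hab n))]
  linarith

section DerivativeBounds

variable {I : Set ℝ} {ρ ρ' : ℝ → ℝ} {K : ℝ} {n : ℕ}

theorem Convex.abs_pow_sub_pow_le_of_hasDerivWithinAt (hI : Convex ℝ I)
    (hderiv : ∀ z ∈ I, HasDerivWithinAt ρ (ρ' z) I z) (hK : ∀ z ∈ I, |ρ z| ^ n * |ρ' z| ≤ K)
    {x y : ℝ} (hx : x ∈ I) (hy : y ∈ I) :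
    |ρ x ^ (n + 1) - ρ y ^ (n + 1)| ≤ (n + 1) * K * |x - y| := by
  have hpow : ∀ z ∈ I, HasDerivWithinAt (fun w => ρ w ^ (n + 1))
      ((n + 1 : ℕ) * ρ z ^ n * ρ' z) I z := fun z hz => by
    simpa using (hderiv z hz).fun_pow (n + 1)
  have hnorm : ∀ z ∈ I, ‖((n + 1 : ℕ) : ℝ) * ρ z ^ n * ρ' z‖ ≤ (n + 1) * K := fun z hz => by
    rw [Real.norm_eq_abs, abs_mul, abs_mul, abs_pow, mul_assoc, Nat.abs_cast]
    push_cast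
    exact mul_le_mul_of_nonneg_left (hK z hz) (by positivity)
  simpa [Real.norm_eq_abs, abs_sub_comm] using
    hI.norm_image_sub_le_of_norm_hasDerivWithin_le hpow hnorm hy hx

theorem Convex.abs_sub_le_rpow_of_hasDerivWithinAt (hI : Convex ℝ I)
    (hnonneg : ∀ z ∈ I, 0 ≤ ρ z) (hderiv : ∀ z ∈ I, HasDerivWithinAt ρ (ρ' z) I z)
    (hK : ∀ z ∈ I, ρ z ^ n * |ρ' z| ≤ K) {x y : ℝ} (hx : x ∈ I) (hy : y ∈ I) :
    |ρ x - ρ y| ≤ ((n + 1) * K * |x - y|) ^ ((n + 1 : ℝ)⁻¹) := by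
  have hpow := abs_sub_pow_le_abs_pow_sub (n := n + 1) (hnonneg x hx) (hnonneg y hy) n.succ_ne_zero
  have hlip := hI.abs_pow_sub_pow_le_of_hasDerivWithinAt hderiv
    (fun z hz => by rw [abs_of_nonneg (hnonneg z hz)]; exact hK z hz) hx hy
  have hcast : |ρ x - ρ y| ^ ((n : ℝ) + 1) = |ρ x - ρ y| ^ (n + 1) := by
    exact_mod_cast Real.rpow_natCast _ (n + 1)
  rw [Real.le_rpow_inv_iff_of_pos (abs_nonneg _) ((abs_nonneg _).trans hlip) (by positivity), hcast]
  exact hpow.trans hlip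

end DerivativeBounds

section PointwiseBounds

variable {r t d C : ℝ}

theorem mul_add_mul_abs_le_of_abs_le_div (hr : 0 < r) (ht : 0 ≤ t) (h : |d| ≤ C / (r * (r + t))) :
    r * (r + t) * |d| ≤ C := by
  rwa [le_div_iff₀ (by positivity), mul_comm] at h

theorem sq_mul_abs_le_of_abs_le_div (hr : 0 < r) (ht : 0 ≤ t) (h : |d| ≤ C / (r * (r + t))) :
    r ^ 2 * |d| ≤ C := by
  have hprod := mul_add_mul_abs_le_of_abs_le_div hr ht h
  nlinarith [mul_nonneg (mul_nonneg hr.le ht) (abs_nonneg d)]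

theorem mul_abs_le_div_of_abs_le_div (hr : 0 < r) (ht : 0 < t) (h : |d| ≤ C / (r * (r + t))) :
    r * |d| ≤ C / t := by
  have hprod := mul_add_mul_abs_le_of_abs_le_div hr ht.le h
  rw [le_div_iff₀ ht]
  nlinarith [mul_nonneg (mul_nonneg hr.le hr.le) (abs_nonneg d)]

end PointwiseBounds

theorem stmt_7 (I : Set ℝ) (hI : Convex ℝ I) (C Δ : ℝ) (hC : 0 < C) (hΔ : 0 < Δ)
    (ρ ρ' : ℝ → ℝ) (hpos : ∀ x ∈ I, 0 < ρ x)
    (hderiv : ∀ x ∈ I, HasDerivWithinAt ρ (ρ' x) I x)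
    (hbound : ∀ x ∈ I, |ρ' x| ≤ C / (ρ x * (ρ x + Δ ^ ((1:ℝ)/3)))) :
    ∀ x ∈ I, ∀ y ∈ I, |ρ x - ρ y| ≤
      min ((3 * C * |x - y|) ^ ((1:ℝ)/3))
        ((2 * C * |x - y|) ^ ((1:ℝ)/2) * Δ ^ (-(1:ℝ)/6)) := by
  intro x hx y hy
  have ht : 0 < Δ ^ ((1:ℝ)/3) := by positivity
  have hnonneg : ∀ z ∈ I, 0 ≤ ρ z := fun z hz => (hpos z hz).le
  refine le_min ?_ ?_
  · have hcube := hI.abs_sub_le_rpow_of_hasDerivWithinAt (n := 2) hnonneg hderiv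
      (fun z hz => sq_mul_abs_le_of_abs_le_div (hpos z hz) ht.le (hbound z hz)) hx hy
    calc |ρ x - ρ y| ≤ _ := hcube
      _ = (3 * C * |x - y|) ^ ((1:ℝ)/3) := by norm_num
  · have hsq := hI.abs_sub_le_rpow_of_hasDerivWithinAt (n := 1) hnonneg hderiv
      (fun z hz => by rw [pow_one]; exact mul_abs_le_div_of_abs_le_div (hpos z hz) ht (hbound z hz))
      hx hy
    calc |ρ x - ρ y| ≤ _ := hsq
      _ = (2 * C * |x - y| * (Δ ^ ((1:ℝ)/3))⁻¹) ^ ((1:ℝ)/2) := by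
        push_cast
        ring_nf
      _ = (2 * C * |x - y|) ^ ((1:ℝ)/2) * Δ ^ (-(1:ℝ)/6) := by
        rw [Real.mul_rpow (by positivity) (by positivity), ← Real.rpow_neg hΔ.le,
          ← Real.rpow_mul hΔ.le]
        norm_num
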